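/- arXiv:2105.08113 — 4 statements merged into one kernel-verified Lean document; each statement's English description precedes it below -/
import Mathlib

section
/- Let X, Y ⊆ ℝ^d be finite, let Q_X ⊆ X and Q_Y ⊆ Y both be nonempty, and fix x₀ ∈ Q_X, y₀ ∈ Q_Y. Suppose z ∈ ℝ^d satisfies z ∈ ⋂_{x∈Q_X} vor(x,X) ∩ ⋂_{y∈Q_Y} vor(y,Y). Set t := (‖y₀−z‖² − ‖x₀−z‖² + 1)/2 and s := (z,t) ∈ ℝ^{d+1}. Then s ∈ ⋂_{x∈Q_X} vor((x,0), X̂∪Ŷ) ∩ ⋂_{y∈Q_Y} vor((y,1), X̂∪Ŷ); in particular this intersection of Voronoi cells in ℝ^{d+1} is nonempty. -/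
noncomputable section

/-- The Voronoi cell of `x` with respect to the set `S`:
all points at least as close to `x` as to any point of `S`. -/
def vor {α : Type*} [PseudoMetricSpace α] (x : α) (S : Set α) : Set α :=
  {z | ∀ x' ∈ S, dist z x ≤ dist z x'}

/-- Lift a point of `ℝ^d` to `ℝ^{d+1}` (with the Euclidean metric) at height `t`. -/
def lift {d : ℕ} (x : EuclideanSpace ℝ (Fin d)) (t : ℝ) :
    WithLp 2 (EuclideanSpace ℝ (Fin d) × ℝ) :=
  (WithLp.equiv 2 (EuclideanSpace ℝ (Fin d) × ℝ)).symm (x, t)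

/-- The lifted set `X̂ ∪ Ŷ ⊆ ℝ^{d+1}`, where `X̂ = X × {0}` and `Ŷ = Y × {1}`. -/
def liftedUnion {d : ℕ} (X Y : Finset (EuclideanSpace ℝ (Fin d))) :
    Set (WithLp 2 (EuclideanSpace ℝ (Fin d) × ℝ)) :=
  ((fun x => lift x 0) '' (X : Set (EuclideanSpace ℝ (Fin d)))) ∪
    ((fun y => lift y 1) '' (Y : Set (EuclideanSpace ℝ (Fin d))))

/-- The intersection of the Voronoi cells (w.r.t. `X̂ ∪ Ŷ`) of the lifted points of
`Q_X` (at height `0`) and of `Q_Y` (at height `1`). -/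
def liftedVorInter {d : ℕ} (X Y QX QY : Finset (EuclideanSpace ℝ (Fin d))) :
    Set (WithLp 2 (EuclideanSpace ℝ (Fin d) × ℝ)) :=
  (⋂ x ∈ QX, vor (lift x 0) (liftedUnion X Y)) ∩ ⋂ y ∈ QY, vor (lift y 1) (liftedUnion X Y)

lemma dist_lift {d : ℕ} (x y : EuclideanSpace ℝ (Fin d)) (t u : ℝ) :
    dist (lift x t) (lift y u) = Real.sqrt (dist x y ^ 2 + (t - u) ^ 2) := by
  rw [WithLp.prod_dist_eq_of_L2]
  congr 1
  simp [lift, Real.dist_eq, sq_abs]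

/-- If `z` lies in the intersection of the Voronoi cells of `Q_X` w.r.t. `X` and of
`Q_Y` w.r.t. `Y`, then the lifted point `s = (z, t)` with
`t = (‖y₀ − z‖² − ‖x₀ − z‖² + 1)/2` lies in the intersection of the Voronoi cells of
the lifted simplex w.r.t. `X̂ ∪ Ŷ`; in particular that intersection is nonempty. -/
theorem lifted_voronoi_mem (d : ℕ) (X Y QX QY : Finset (EuclideanSpace ℝ (Fin d)))
    (hQX : QX ⊆ X) (hQY : QY ⊆ Y)
    (x₀ : EuclideanSpace ℝ (Fin d)) (hx₀ : x₀ ∈ QX)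
    (y₀ : EuclideanSpace ℝ (Fin d)) (hy₀ : y₀ ∈ QY)
    (z : EuclideanSpace ℝ (Fin d))
    (hz : z ∈ (⋂ x ∈ QX, vor x (X : Set (EuclideanSpace ℝ (Fin d)))) ∩
      ⋂ y ∈ QY, vor y (Y : Set (EuclideanSpace ℝ (Fin d)))) :
    lift z ((‖y₀ - z‖ ^ 2 - ‖x₀ - z‖ ^ 2 + 1) / 2) ∈ liftedVorInter X Y QX QY ∧
      (liftedVorInter X Y QX QY).Nonempty := by
  obtain ⟨hzX, hzY⟩ := hz
  simp only [Set.mem_iInter] at hzX hzY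
  have hX : ∀ x ∈ QX, ∀ x' ∈ (X : Set (EuclideanSpace ℝ (Fin d))), dist z x ≤ dist z x' :=
    fun x hx x' hx' => hzX x hx x' hx'
  have hY : ∀ y ∈ QY, ∀ y' ∈ (Y : Set (EuclideanSpace ℝ (Fin d))), dist z y ≤ dist z y' :=
    fun y hy y' hy' => hzY y hy y' hy'
  set t : ℝ := (‖y₀ - z‖ ^ 2 - ‖x₀ - z‖ ^ 2 + 1) / 2 with ht_def
  have hXeq : ∀ x ∈ QX, dist z x = dist z x₀ := fun x hx =>
    le_antisymm (hX x hx x₀ (hQX hx₀)) (hX x₀ hx₀ x (hQX hx))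
  have hYeq : ∀ y ∈ QY, dist z y = dist z y₀ := fun y hy =>
    le_antisymm (hY y hy y₀ (hQY hy₀)) (hY y₀ hy₀ y (hQY hy))
  have hny : ‖y₀ - z‖ = dist z y₀ := by rw [dist_eq_norm, norm_sub_rev]
  have hnx : ‖x₀ - z‖ = dist z x₀ := by rw [dist_eq_norm, norm_sub_rev]
  have ht : 2 * t - 1 = dist z y₀ ^ 2 - dist z x₀ ^ 2 := by
    rw [ht_def, hny, hnx]; ring
  clear_value t
  have key : lift z t ∈ liftedVorInter X Y QX QY := by
    constructor
    · simp only [Set.mem_iInter]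
      intro x hx
      intro p hp
      have h1 : dist z x = dist z x₀ := hXeq x hx
      rcases hp with ⟨x', hx', rfl⟩ | ⟨y', hy', rfl⟩
      · rw [dist_lift, dist_lift]
        apply Real.sqrt_le_sqrt
        have h := hX x hx x' hx'
        nlinarith [dist_nonneg (x := z) (y := x), dist_nonneg (x := z) (y := x')]
      · rw [dist_lift, dist_lift]
        apply Real.sqrt_le_sqrt
        have h2 : dist z y₀ ≤ dist z y' := hY y₀ hy₀ y' hy'
        have h2sq : dist z y₀ ^ 2 ≤ dist z y' ^ 2 :=
          pow_le_pow_left₀ dist_nonneg h2 2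
        have h1sq : dist z x ^ 2 = dist z x₀ ^ 2 := by rw [h1]
        nlinarith [ht, h2sq, h1sq]
    · simp only [Set.mem_iInter]
      intro y hy
      intro p hp
      have h1 : dist z y = dist z y₀ := hYeq y hy
      rcases hp with ⟨x', hx', rfl⟩ | ⟨y', hy', rfl⟩
      · rw [dist_lift, dist_lift]
        apply Real.sqrt_le_sqrt
        have h2 : dist z x₀ ≤ dist z x' := hX x₀ hx₀ x' hx'
        have h2sq : dist z x₀ ^ 2 ≤ dist z x' ^ 2 :=
          pow_le_pow_left₀ dist_nonneg h2 2
        have h1sq : dist z y ^ 2 = dist z y₀ ^ 2 := by rw [h1]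
        nlinarith [ht, h2sq, h1sq]
      · rw [dist_lift, dist_lift]
        apply Real.sqrt_le_sqrt
        have h := hY y hy y' hy'
        nlinarith [dist_nonneg (x := z) (y := y), dist_nonneg (x := z) (y := y')]
  exact ⟨key, ⟨_, key⟩⟩
end
end

section
/- Let X, Y ⊆ ℝ^d be finite with Y nonempty, let Q ⊆ X be nonempty, and fix x₀ ∈ Q. Suppose z ∈ ⋂_{x∈Q} vor(x,X). Set t* := min_{y∈Y} (‖y−z‖² − ‖x₀−z‖² + 1)/2 and s := (z,t*) ∈ ℝ^{d+1}. Then s ∈ ⋂_{x∈Q} vor((x,0), X̂∪Ŷ); in particular this intersection of Voronoi cells in ℝ^{d+1} is nonempty. -/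
noncomputable section

lemma lift_dist {d : ℕ} (a b : EuclideanSpace ℝ (Fin d)) (s t : ℝ) :
    dist (lift a s) (lift b t) = Real.sqrt (dist a b ^ 2 + dist s t ^ 2) := by
  rw [WithLp.prod_dist_eq_of_L2]; rfl

/-- If `z` lies in the intersection of the Voronoi cells of `Q ⊆ X` w.r.t. `X`, then the
lifted point `s = (z, t*)`, with `t* = min_{y ∈ Y} (‖y − z‖² − ‖x₀ − z‖² + 1)/2`, lies in the
intersection of the Voronoi cells of the lifted points of `Q` (at height `0`) w.r.t.
`X̂ ∪ Ŷ`; in particular that intersection is nonempty. -/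
theorem lifted_voronoi_mem_one_sided (d : ℕ) (X Y Q : Finset (EuclideanSpace ℝ (Fin d)))
    (hY : Y.Nonempty) (hQ : Q ⊆ X) (hQne : Q.Nonempty)
    (x₀ : EuclideanSpace ℝ (Fin d)) (hx₀ : x₀ ∈ Q)
    (z : EuclideanSpace ℝ (Fin d))
    (hz : z ∈ ⋂ x ∈ Q, vor x (X : Set (EuclideanSpace ℝ (Fin d)))) :
    lift z ((Y.image fun y => (‖y - z‖ ^ 2 - ‖x₀ - z‖ ^ 2 + 1) / 2).min'
        (hY.image fun y => (‖y - z‖ ^ 2 - ‖x₀ - z‖ ^ 2 + 1) / 2)) ∈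
      (⋂ x ∈ Q, vor (lift x 0) (liftedUnion X Y)) ∧
      (⋂ x ∈ Q, vor (lift x 0) (liftedUnion X Y)).Nonempty := by
  simp only [Set.mem_iInter, vor, Set.mem_setOf_eq] at hz
  set T := (Y.image fun y => (‖y - z‖ ^ 2 - ‖x₀ - z‖ ^ 2 + 1) / 2).min'
      (hY.image fun y => (‖y - z‖ ^ 2 - ‖x₀ - z‖ ^ 2 + 1) / 2) with hTdef
  have hT : ∀ y ∈ Y, T ≤ (‖y - z‖ ^ 2 - ‖x₀ - z‖ ^ 2 + 1) / 2 := fun y hy =>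
    Finset.min'_le _ _ (Finset.mem_image_of_mem _ hy)
  have key : lift z T ∈ ⋂ x ∈ Q, vor (lift x 0) (liftedUnion X Y) := by
    rw [Set.mem_iInter₂]
    intro x hx
    intro p hp
    rcases hp with ⟨x', hx', rfl⟩ | ⟨y, hy, rfl⟩
    · rw [lift_dist, lift_dist]
      have h1 := hz x hx x' hx'
      have h0 : (0:ℝ) ≤ dist z x := dist_nonneg
      apply Real.sqrt_le_sqrt
      nlinarith [dist_nonneg (x := z) (y := x')]
    · rw [lift_dist, lift_dist]
      have h1 := hz x hx x₀ (hQ hx₀)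
      have h2 := hT y hy
      have e1 : ‖y - z‖ = dist z y := by rw [dist_eq_norm']
      have e2 : ‖x₀ - z‖ = dist z x₀ := by rw [dist_eq_norm']
      rw [e1, e2] at h2
      have h0 : (0:ℝ) ≤ dist z x := dist_nonneg
      have h0' : (0:ℝ) ≤ dist z x₀ := dist_nonneg
      apply Real.sqrt_le_sqrt
      rw [Real.dist_eq, Real.dist_eq]
      rw [sq_abs, sq_abs]
      nlinarith [dist_nonneg (x := z) (y := y)]
  exact ⟨key, ⟨_, key⟩⟩
end
end

section
/- Let X, Y ⊆ ℝ^d be finite, Q_X ⊆ X, Q_Y ⊆ Y with Q_X ∪ Q_Y nonempty, and let Q̂ := Q_X×{0} ∪ Q_Y×{1} ⊆ ℝ^{d+1}. If s ∈ ⋂_{q∈Q̂} vor(q, X̂∪Ŷ), then the projection z := π(s) ∈ ℝ^d (dropping the last coordinate) satisfies z ∈ ⋂_{x∈Q_X} vor(x,X) ∩ ⋂_{y∈Q_Y} vor(y,Y). -/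
/-! Shrinking the set of sites only enlarges a Voronoi cell, so a point of the cell of `(q, t)`
with respect to `X̂ ∪ Ŷ` lies in its cell with respect to the sites at the same height `t`. For
those, the last coordinate contributes the same summand to both squared distances from `s`, so
comparing them is comparing the distances from `π(s)`. -/

noncomputable section

def proj {d : ℕ} (s : WithLp 2 (EuclideanSpace ℝ (Fin d) × ℝ)) :
    EuclideanSpace ℝ (Fin d) :=
  ((WithLp.equiv 2 (EuclideanSpace ℝ (Fin d) × ℝ)) s).1

theorem vor_anti {α : Type*} [PseudoMetricSpace α] (x : α) {S T : Set α} (hST : S ⊆ T) :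
    vor x T ⊆ vor x S :=
  fun _ hz x' hx' => hz x' (hST hx')

theorem WithLp.prod_dist_le_dist_iff_of_snd_eq {α β : Type*} [SeminormedAddCommGroup α]
    [SeminormedAddCommGroup β] (s p q : WithLp 2 (α × β)) (hpq : p.snd = q.snd) :
    dist s p ≤ dist s q ↔ dist s.fst p.fst ≤ dist s.fst q.fst := by
  rw [WithLp.prod_dist_eq_of_L2, WithLp.prod_dist_eq_of_L2, hpq,
    Real.sqrt_le_sqrt_iff (by positivity), add_le_add_iff_right,
    pow_le_pow_iff_left₀ dist_nonneg dist_nonneg two_ne_zero]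

theorem proj_mem_vor_of_mem_vor_lift {d : ℕ} {s : WithLp 2 (EuclideanSpace ℝ (Fin d) × ℝ)}
    {q : EuclideanSpace ℝ (Fin d)} {S : Set (EuclideanSpace ℝ (Fin d))} {t : ℝ}
    (hs : s ∈ vor (lift q t) ((fun x => lift x t) '' S)) :
    proj s ∈ vor q S := fun x hx =>
  (WithLp.prod_dist_le_dist_iff_of_snd_eq s (lift q t) (lift x t) rfl).mp (hs _ ⟨x, hx, rfl⟩)

theorem proj_mem_voronoi_inter_general (d : ℕ) (X Y QX QY : Finset (EuclideanSpace ℝ (Fin d)))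
    (s : WithLp 2 (EuclideanSpace ℝ (Fin d) × ℝ))
    (hs : s ∈ ⋂ q ∈ ((fun x => lift x 0) '' (QX : Set (EuclideanSpace ℝ (Fin d)))) ∪
        ((fun y => lift y 1) '' (QY : Set (EuclideanSpace ℝ (Fin d)))),
      vor q (liftedUnion X Y)) :
    proj s ∈ (⋂ x ∈ QX, vor x (X : Set (EuclideanSpace ℝ (Fin d)))) ∩
      ⋂ y ∈ QY, vor y (Y : Set (EuclideanSpace ℝ (Fin d))) := by
  simp only [Set.mem_iInter] at hs
  refine ⟨Set.mem_iInter₂.mpr fun x hx => ?_, Set.mem_iInter₂.mpr fun y hy => ?_⟩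
  · exact proj_mem_vor_of_mem_vor_lift <|
      vor_anti _ Set.subset_union_left (hs _ (Or.inl ⟨x, hx, rfl⟩))
  · exact proj_mem_vor_of_mem_vor_lift <|
      vor_anti _ Set.subset_union_right (hs _ (Or.inr ⟨y, hy, rfl⟩))

/-- If `s` lies in the intersection of the Voronoi cells (w.r.t. `X̂ ∪ Ŷ`) of the lifted
simplex `Q̂ = Q_X × {0} ∪ Q_Y × {1}`, then its projection `z = π(s)` lies in the
intersection of the Voronoi cells of `Q_X` w.r.t. `X` and of `Q_Y` w.r.t. `Y`. -/
theorem proj_mem_voronoi_inter (d : ℕ) (X Y QX QY : Finset (EuclideanSpace ℝ (Fin d)))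
    (hQX : QX ⊆ X) (hQY : QY ⊆ Y) (hne : ((QX : Set (EuclideanSpace ℝ (Fin d))) ∪ (QY : Set (EuclideanSpace ℝ (Fin d)))).Nonempty)
    (s : WithLp 2 (EuclideanSpace ℝ (Fin d) × ℝ))
    (hs : s ∈ ⋂ q ∈ ((fun x => lift x 0) '' (QX : Set (EuclideanSpace ℝ (Fin d)))) ∪
        ((fun y => lift y 1) '' (QY : Set (EuclideanSpace ℝ (Fin d)))),
      vor q (liftedUnion X Y)) :
    proj s ∈ (⋂ x ∈ QX, vor x (X : Set (EuclideanSpace ℝ (Fin d)))) ∩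
      ⋂ y ∈ QY, vor y (Y : Set (EuclideanSpace ℝ (Fin d))) :=
  proj_mem_voronoi_inter_general d X Y QX QY s hs
end
end

section
/- Let X, Y ⊆ ℝ^d be nonempty finite sets, Q_X ⊆ X, Q_Y ⊆ Y with Q_X ∪ Q_Y nonempty, and let Q̂ := Q_X×{0} ∪ Q_Y×{1} ⊆ ℝ^{d+1}. Then ⋂_{x∈Q_X} vor(x,X) ∩ ⋂_{y∈Q_Y} vor(y,Y) is nonempty if and only if ⋂_{q∈Q̂} vor(q, X̂∪Ŷ) is nonempty. (Equivalently, the simplexes of the coupled alpha complex A^co_∞(X,Y) are exactly the projections of the simplexes of the Delaunay triangulation of the lifted set X̂∪Ŷ.) -/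
noncomputable section

lemma lift_fst {d : ℕ} (x : EuclideanSpace ℝ (Fin d)) (t : ℝ) : (lift x t).fst = x := rfl
lemma lift_snd {d : ℕ} (x : EuclideanSpace ℝ (Fin d)) (t : ℝ) : (lift x t).snd = t := rfl

lemma dist_sq_prod {d : ℕ} (p q : WithLp 2 (EuclideanSpace ℝ (Fin d) × ℝ)) :
    dist p q ^ 2 = dist p.fst q.fst ^ 2 + dist p.snd q.snd ^ 2 := by
  rw [WithLp.prod_dist_eq_of_L2, Real.sq_sqrt]
  positivity

lemma dist_le_iff_sq {d : ℕ} (p q r : WithLp 2 (EuclideanSpace ℝ (Fin d) × ℝ)) :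
    dist p q ≤ dist p r ↔ dist p q ^ 2 ≤ dist p r ^ 2 :=
  (pow_le_pow_iff_left₀ dist_nonneg dist_nonneg two_ne_zero).symm

/-- A simplex `Q = Q_X ∪ Q_Y` belongs to the coupled alpha complex `A^co_∞(X, Y)`
(its Voronoi cells w.r.t. `X` and `Y` have a common point) if and only if the
lifted simplex `Q̂ = Q_X × {0} ∪ Q_Y × {1}` belongs to the Delaunay triangulation
of the lifted set `X̂ ∪ Ŷ` (the Voronoi cells of `Q̂` w.r.t. `X̂ ∪ Ŷ` have a common
point). -/
theorem coupled_alpha_eq_proj_delaunay (d : ℕ) (X Y QX QY : Finset (EuclideanSpace ℝ (Fin d)))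
    (hX : X.Nonempty) (hY : Y.Nonempty) (hQX : QX ⊆ X) (hQY : QY ⊆ Y)
    (hne : ((QX : Set (EuclideanSpace ℝ (Fin d))) ∪
      (QY : Set (EuclideanSpace ℝ (Fin d)))).Nonempty) :
    ((⋂ x ∈ QX, vor x (X : Set (EuclideanSpace ℝ (Fin d)))) ∩
        ⋂ y ∈ QY, vor y (Y : Set (EuclideanSpace ℝ (Fin d)))).Nonempty ↔
      (⋂ q ∈ ((fun x => lift x 0) '' (QX : Set (EuclideanSpace ℝ (Fin d)))) ∪
          ((fun y => lift y 1) '' (QY : Set (EuclideanSpace ℝ (Fin d)))),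
        vor q (liftedUnion X Y)).Nonempty := by
  constructor
  · rintro ⟨z, hz1, hz2⟩
    simp only [Set.mem_iInter, vor, Set.mem_setOf_eq] at hz1 hz2
    set a : ℝ := Metric.infDist z (X : Set (EuclideanSpace ℝ (Fin d))) with ha
    set b : ℝ := Metric.infDist z (Y : Set (EuclideanSpace ℝ (Fin d))) with hb
    have ha0 : 0 ≤ a := Metric.infDist_nonneg
    have hb0 : 0 ≤ b := Metric.infDist_nonneg
    obtain ⟨xm, hxm, hxmd⟩ := (X.finite_toSet.isCompact).exists_infDist_eq_dist
      (by exact_mod_cast hX) z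
    obtain ⟨ym, hym, hymd⟩ := (Y.finite_toSet.isCompact).exists_infDist_eq_dist
      (by exact_mod_cast hY) z
    have haQ : ∀ x ∈ QX, dist z x = a := by
      intro x hx
      refine le_antisymm ?_ (Metric.infDist_le_dist_of_mem (by exact_mod_cast hQX hx))
      rw [ha, hxmd]
      exact hz1 x hx xm hxm
    have hbQ : ∀ y ∈ QY, dist z y = b := by
      intro y hy
      refine le_antisymm ?_ (Metric.infDist_le_dist_of_mem (by exact_mod_cast hQY hy))
      rw [hb, hymd]
      exact hz2 y hy ym hym
    set t : ℝ := (1 + b ^ 2 - a ^ 2) / 2 with ht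
    refine ⟨lift z t, ?_⟩
    simp only [Set.mem_iInter, vor, Set.mem_setOf_eq]
    have key : ∀ q ∈ ((fun x => lift x 0) '' (QX : Set (EuclideanSpace ℝ (Fin d)))) ∪
        ((fun y => lift y 1) '' (QY : Set (EuclideanSpace ℝ (Fin d)))),
        ∀ p ∈ liftedUnion X Y, dist (lift z t) q ≤ dist (lift z t) p := by
      rintro q (⟨x, hx, rfl⟩ | ⟨y, hy, rfl⟩) p (⟨x', hx', rfl⟩ | ⟨y', hy', rfl⟩) <;>
        rw [dist_le_iff_sq] <;>
        simp only [dist_sq_prod, lift_fst, lift_snd, Real.dist_eq]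
      · have h1 := hz1 x hx x' hx'
        nlinarith [dist_nonneg (x := z) (y := x), dist_nonneg (x := z) (y := x')]
      · have h1 : dist z x = a := haQ x hx
        have h2 : b ≤ dist z y' := Metric.infDist_le_dist_of_mem hy'
        nlinarith [sq_abs (t - 0), sq_abs (t - 1)]
      · have h1 : dist z y = b := hbQ y hy
        have h2 : a ≤ dist z x' := Metric.infDist_le_dist_of_mem hx'
        nlinarith [sq_abs (t - 0), sq_abs (t - 1)]
      · have h1 := hz2 y hy y' hy'
        nlinarith [dist_nonneg (x := z) (y := y), dist_nonneg (x := z) (y := y'),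
          sq_abs (t - 1)]
    exact key
  · rintro ⟨p, hp⟩
    simp only [Set.mem_iInter, vor, Set.mem_setOf_eq] at hp
    refine ⟨p.fst, ?_, ?_⟩ <;> simp only [Set.mem_iInter, vor, Set.mem_setOf_eq]
    · intro x hx x' hx'
      have h := hp (lift x 0) (Or.inl ⟨x, hx, rfl⟩) (lift x' 0)
        (Or.inl ⟨x', hx', rfl⟩)
      rw [dist_le_iff_sq] at h
      simp only [dist_sq_prod, lift_fst, lift_snd] at h
      have := dist_nonneg (x := p.fst) (y := x)
      have := dist_nonneg (x := p.fst) (y := x')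
      nlinarith
    · intro y hy y' hy'
      have h := hp (lift y 1) (Or.inr ⟨y, hy, rfl⟩) (lift y' 1)
        (Or.inr ⟨y', hy', rfl⟩)
      rw [dist_le_iff_sq] at h
      simp only [dist_sq_prod, lift_fst, lift_snd] at h
      have := dist_nonneg (x := p.fst) (y := y)
      have := dist_nonneg (x := p.fst) (y := y')
      nlinarith
end
end
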